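/- arXiv:2212.12199 — 2 statements merged into one kernel-verified Lean document; each statement's English description precedes it below -/
import Mathlib

section
/- Let q = 3^(2m+1) for a positive integer m, and let K be an algebraically closed field of characteristic 3. The set of pairs (t1, t2) in K* × K* satisfying t1 = t2^(-3^m) and t2 = t1^(3^(m+1)) · t2^(-3^(m+1)) is a group under componentwise multiplication, cyclic of order q + 3^(m+1) + 1 (i.e., q + √(3q) + 1). -/
/-- For `q = 3^(2m+1)` and `K` the algebraic closure of `GF(3)`,
the set of pairs `(t1, t2)` in `Kˣ × Kˣ` with `t1 = t2^(-3^m)` and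
`t2 = t1^(3^(m+1)) · t2^(-3^(m+1))` is a subgroup, cyclic of order
`q + 3^(m+1) + 1 = q + √(3q) + 1`. -/
theorem torus4_of_2G2 (m : ℕ) (hm : 0 < m) (K : Type*) [Field K] [IsAlgClosed K]
    [CharP K 3] :
    ∃ H : Subgroup (Kˣ × Kˣ),
      (H : Set (Kˣ × Kˣ)) =
        {t : Kˣ × Kˣ | t.1 = t.2 ^ (-(3 ^ m : ℤ)) ∧
          t.2 = t.1 ^ (3 ^ (m + 1)) * t.2 ^ (-(3 ^ (m + 1) : ℤ))} ∧
      IsCyclic H ∧ Nat.card H = 3 ^ (2 * m + 1) + 3 ^ (m + 1) + 1 := by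
  set n : ℕ := 3 ^ (2 * m + 1) + 3 ^ (m + 1) + 1 with hn
  have hn3 : ¬ (3 ∣ n) := by
    intro h
    have h1 : (3:ℕ) ∣ 3 ^ (2*m+1) + 3 ^ (m+1) :=
      Nat.dvd_add (dvd_pow_self 3 (by omega)) (dvd_pow_self 3 (by omega))
    omega
  have : NeZero n := ⟨by positivity⟩
  have : NeZero (n : K) := ⟨by
    rw [Ne, CharP.cast_eq_zero_iff K 3]
    exact hn3⟩
  have hexp : (-(3 ^ m : ℤ)) * (3 ^ (m + 1) : ℤ) + -(3 ^ (m + 1) : ℤ) = 1 - (n : ℤ) := by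
    have h3 : (3:ℤ) ^ (2*m+1) = 3 ^ m * 3 ^ (m+1) := by rw [← pow_add]; congr 1; omega
    push_cast [hn]
    rw [h3]; ring
  have key : ∀ b : Kˣ, (b ^ (-(3^m:ℤ))) ^ ((3:ℕ)^(m+1)) * b ^ (-(3^(m+1):ℤ))
      = b ^ ((1:ℤ) - n) := by
    intro b
    rw [← zpow_natCast (b ^ (-(3^m:ℤ))) (3^(m+1)), ← zpow_mul, ← zpow_add, ← hexp]
    push_cast
    ring_nf
  have hiff : ∀ b : Kˣ, b = b ^ ((1:ℤ) - n) ↔ b ^ (n:ℕ) = 1 := by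
    intro b
    rw [zpow_sub, zpow_one, zpow_natCast, eq_comm, mul_inv_eq_iff_eq_mul, left_eq_mul]
  let φ : Kˣ →* Kˣ × Kˣ := (zpowGroupHom (-(3 ^ m : ℤ))).prod (MonoidHom.id Kˣ)
  have hφinj : Function.Injective φ := fun a b h => congrArg Prod.snd h
  refine ⟨(rootsOfUnity n K).map φ, ?_, ?_, ?_⟩
  · ext ⟨a, b⟩
    simp only [Subgroup.coe_map, Set.mem_image, SetLike.mem_coe, mem_rootsOfUnity,
      Set.mem_setOf_eq]
    constructor
    · rintro ⟨x, hx, hxab⟩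
      have h1 : a = x ^ (-(3 ^ m : ℤ)) := (congrArg Prod.fst hxab).symm
      have h2 : b = x := (congrArg Prod.snd hxab).symm
      subst h2
      refine ⟨h1, ?_⟩
      rw [h1, key b]
      exact (hiff b).mpr hx
    · rintro ⟨h1, h2⟩
      rw [h1, key b] at h2
      exact ⟨b, (hiff b).mp h2, Prod.ext h1.symm rfl⟩
  · have e := Subgroup.equivMapOfInjective (rootsOfUnity n K) φ hφinj
    exact isCyclic_of_surjective e e.surjective
  · have e := Subgroup.equivMapOfInjective (rootsOfUnity n K) φ hφinj
    rw [← Nat.card_congr e.toEquiv, HasEnoughRootsOfUnity.natCard_rootsOfUnity K n]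
end

section
/- Let q = 3^(2m+1) for a positive integer m, and let K be an algebraically closed field of characteristic 3. The set of pairs (t1, t2) in K* × K* satisfying t1^(3^(m+1)+1) = t2^(2·3^m) and t1^(2·3^(m+1)) = t2^(3^(m+1)-1) is a group under componentwise multiplication, isomorphic to Z/2 × Z/((q+1)/2). -/
private lemma rootsOfUnity_mulEquiv_zmod (K : Type*) [Field K] [IsAlgClosed K] (n : ℕ)
    [NeZero n] [NeZero ((n : ℕ) : K)] :
    Nonempty ((rootsOfUnity n K) ≃* Multiplicative (ZMod n)) := by
  obtain ⟨ζ, hζ⟩ := HasEnoughRootsOfUnity.exists_primitiveRoot K n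
  have hζu : IsPrimitiveRoot (hζ.isUnit (NeZero.ne n)).unit n := hζ.isUnit_unit (NeZero.ne n)
  exact ⟨((AddEquiv.toMultiplicative hζu.zmodEquivZPowers).trans
      ((MulEquiv.multiplicativeAdditive _).trans (MulEquiv.subgroupCongr hζu.zpowers_eq))).symm⟩

/-- For `q = 3^(2m+1)` and `K` the algebraic closure of `GF(3)`,
the set of pairs `(t1, t2)` in `Kˣ × Kˣ` with `t1^(3^(m+1)+1) = t2^(2·3^m)` and
`t1^(2·3^(m+1)) = t2^(3^(m+1)-1)` is a subgroup isomorphic to `ℤ/2 × ℤ/((q+1)/2)`. -/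
theorem torus3_of_2G2 (m : ℕ) (hm : 0 < m) (K : Type*) [Field K] [IsAlgClosed K]
    [CharP K 3] :
    ∃ H : Subgroup (Kˣ × Kˣ),
      (H : Set (Kˣ × Kˣ)) =
        {t : Kˣ × Kˣ | t.1 ^ (3 ^ (m + 1) + 1) = t.2 ^ (2 * 3 ^ m) ∧
          t.1 ^ (2 * 3 ^ (m + 1)) = t.2 ^ (3 ^ (m + 1) - 1)} ∧
      Nonempty (H ≃* Multiplicative (ZMod 2 × ZMod ((3 ^ (2 * m + 1) + 1) / 2))) := by
  have ha1 : 1 ≤ 3 ^ m := Nat.one_le_pow _ _ (by norm_num)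
  have haodd : Odd (3 ^ m) := (by decide : Odd 3).pow
  set a := 3 ^ m with ha
  have hq : 3 ^ (2 * m + 1) = 3 * (a * a) := by
    rw [ha, two_mul, pow_succ', ← pow_add]
  obtain ⟨b, hb⟩ : ∃ b, a * a = b := ⟨_, rfl⟩
  have hbodd : Odd b := hb ▸ haodd.mul haodd
  obtain ⟨N, hN⟩ : ∃ N, 3 * b + 1 = 2 * N := by
    obtain ⟨k, hk⟩ := hbodd; exact ⟨3 * k + 2, by omega⟩
  have hNdiv : (3 ^ (2 * m + 1) + 1) / 2 = N := by rw [hq, hb]; omega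
  obtain ⟨c, hc⟩ : ∃ c, a + 1 = 2 * c := by
    obtain ⟨k, hk⟩ := haodd; exact ⟨k + 1, by omega⟩
  obtain ⟨u, hu⟩ : ∃ u, 3 * a + 1 = 2 * u := by
    obtain ⟨k, hk⟩ := haodd; exact ⟨3 * k + 2, by omega⟩
  have h3a : (3 : ℕ) ^ (m + 1) = 3 * a := by rw [ha, pow_succ, mul_comm]
  rw [h3a, hNdiv]
  -- key numerical identities
  have K1 : c * (3 * a + 1) = N + 2 * a := by
    have h1 : 2 * (c * (3 * a + 1)) = 3 * b + 4 * a + 1 := by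
      calc 2 * (c * (3 * a + 1)) = (2 * c) * (3 * a + 1) := by ring
        _ = (a + 1) * (3 * a + 1) := by rw [← hc]
        _ = 3 * (a * a) + 4 * a + 1 := by ring
        _ = 3 * b + 4 * a + 1 := by rw [hb]
    omega
  have K2 : c * (2 * (3 * a)) = N * 2 + (3 * a - 1) := by
    have h1 : c * (2 * (3 * a)) = 3 * b + 3 * a := by
      calc c * (2 * (3 * a)) = (2 * c) * (3 * a) := by ring
        _ = (a + 1) * (3 * a) := by rw [← hc]
        _ = 3 * (a * a) + 3 * a := by ring
        _ = 3 * b + 3 * a := by rw [hb]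
    omega
  have K3 : (a + 1) * u = N + 2 * a := by
    have h1 : 2 * ((a + 1) * u) = 3 * b + 4 * a + 1 := by
      calc 2 * ((a + 1) * u) = (a + 1) * (2 * u) := by ring
        _ = (a + 1) * (3 * a + 1) := by rw [← hu]
        _ = 3 * (a * a) + 4 * a + 1 := by ring
        _ = 3 * b + 4 * a + 1 := by rw [hb]
    omega
  haveI : NeZero N := ⟨by omega⟩
  haveI : NeZero ((2 : ℕ) : K) := ⟨fun h => by
    rw [CharP.cast_eq_zero_iff K 3 2] at h; omega⟩
  haveI : NeZero ((N : ℕ) : K) := ⟨fun h => by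
    rw [CharP.cast_eq_zero_iff K 3 N] at h; omega⟩
  obtain ⟨i2⟩ := rootsOfUnity_mulEquiv_zmod K 2
  obtain ⟨iN⟩ := rootsOfUnity_mulEquiv_zmod K N
  let H : Subgroup (Kˣ × Kˣ) :=
    { carrier := {t : Kˣ × Kˣ | t.1 ^ (3 * a + 1) = t.2 ^ (2 * a) ∧
        t.1 ^ (2 * (3 * a)) = t.2 ^ (3 * a - 1)}
      one_mem' := by simp
      mul_mem' := fun hx hy => by
        simp only [Set.mem_setOf_eq, Prod.fst_mul, Prod.snd_mul, mul_pow] at *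
        rw [hx.1, hx.2, hy.1, hy.2]; exact ⟨rfl, rfl⟩
      inv_mem' := fun hx => by
        simp only [Set.mem_setOf_eq, Prod.fst_inv, Prod.snd_inv, inv_pow] at *
        rw [hx.1, hx.2]; exact ⟨rfl, rfl⟩ }
  refine ⟨H, rfl, ?_⟩
  let ψ : (rootsOfUnity 2 K) × (rootsOfUnity N K) →* Kˣ × Kˣ :=
    { toFun := fun p => ((p.1 : Kˣ) * (p.2 : Kˣ) ^ c, (p.2 : Kˣ))
      map_one' := by simp
      map_mul' := fun p q => by
        simp only [Prod.fst_mul, Prod.snd_mul, Subgroup.coe_mul, Prod.mk_mul_mk, mul_pow,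
          Prod.mk.injEq]
        exact ⟨mul_mul_mul_comm _ _ _ _, trivial⟩ }
  have hinj : Function.Injective ψ := by
    rintro ⟨ε, s⟩ ⟨ε', s'⟩ h
    simp only [ψ, MonoidHom.coe_mk, OneHom.coe_mk, Prod.mk.injEq] at h
    obtain ⟨h1, h2⟩ := h
    have hs : s = s' := Subtype.ext h2
    subst hs
    exact Prod.ext (Subtype.ext (mul_right_cancel h1)) rfl
  have hrange : ψ.range = H := by
    ext t
    simp only [MonoidHom.mem_range, ψ, MonoidHom.coe_mk, OneHom.coe_mk]
    constructor
    · rintro ⟨⟨ε, s⟩, rfl⟩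
      have hε : (ε : Kˣ) ^ 2 = 1 := (mem_rootsOfUnity 2 (ε : Kˣ)).mp ε.2
      have hs : (s : Kˣ) ^ N = 1 := (mem_rootsOfUnity N (s : Kˣ)).mp s.2
      constructor
      · show ((ε : Kˣ) * (s : Kˣ) ^ c) ^ (3 * a + 1) = (s : Kˣ) ^ (2 * a)
        have hE : (ε : Kˣ) ^ (3 * a + 1) = 1 := by rw [hu, pow_mul, hε, one_pow]
        have hS : ((s : Kˣ) ^ c) ^ (3 * a + 1) = (s : Kˣ) ^ (2 * a) := by
          rw [← pow_mul, K1, pow_add, hs, one_mul]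
        rw [mul_pow, hE, hS, one_mul]
      · show ((ε : Kˣ) * (s : Kˣ) ^ c) ^ (2 * (3 * a)) = (s : Kˣ) ^ (3 * a - 1)
        have hE : (ε : Kˣ) ^ (2 * (3 * a)) = 1 := by rw [pow_mul, hε, one_pow]
        have hS : ((s : Kˣ) ^ c) ^ (2 * (3 * a)) = (s : Kˣ) ^ (3 * a - 1) := by
          rw [← pow_mul, K2, pow_add, pow_mul, hs, one_pow, one_mul]
        rw [mul_pow, hE, hS, one_mul]
    · rintro ⟨h1, h2⟩
      have ht12 : t.1 ^ 2 = t.2 ^ (a + 1) := by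
        have e : t.1 ^ (2 * (3 * a)) * t.1 ^ 2 = t.2 ^ (3 * a - 1) * t.2 ^ (a + 1) := by
          rw [← pow_add, ← pow_add,
            show 2 * (3 * a) + 2 = (3 * a + 1) * 2 by ring,
            show (3 * a - 1) + (a + 1) = (2 * a) * 2 by omega,
            pow_mul, pow_mul, h1]
        rw [h2] at e
        exact mul_left_cancel e
      have hsN : t.2 ^ N = 1 := by
        have e2 : t.2 ^ N * t.2 ^ (2 * a) = t.2 ^ (2 * a) := by
          rw [← pow_add, ← K3, pow_mul, ← ht12, ← pow_mul, ← hu, h1]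
        have e3 : t.2 ^ N * t.2 ^ (2 * a) = 1 * t.2 ^ (2 * a) := by rw [one_mul]; exact e2
        exact mul_right_cancel e3
      have hε2 : (t.1 * (t.2 ^ c)⁻¹) ^ 2 = 1 := by
        rw [mul_pow, ht12, ← inv_pow, ← pow_mul, show c * 2 = a + 1 by omega]
        simp
      refine ⟨(⟨t.1 * (t.2 ^ c)⁻¹, (mem_rootsOfUnity _ _).mpr hε2⟩,
        ⟨t.2, (mem_rootsOfUnity _ _).mpr hsN⟩), ?_⟩
      exact Prod.ext (inv_mul_cancel_right _ _) rfl
  have e0 : ψ.range ≃* H := MulEquiv.subgroupCongr hrange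
  exact ⟨e0.symm.trans ((MonoidHom.ofInjective hinj).symm.trans
    ((i2.prodCongr iN).trans (MulEquiv.prodMultiplicative (G := ZMod 2) (H := ZMod N)).symm))⟩
end
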